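/- For any partition λ, the moment generating series of the transition measure satisfies ∑_{i=1}^{ℓ(λ)+1} c_i(λ)/(z - λ_i + i - 1) = (1/z)·C_λ(-z)²/(C_λ(-z-1)·C_λ(-z+1)), as an identity of rational functions in z, where C_λ(z) = ∏_{(i,j)∈λ}(z + j - i) is the content polynomial and c_i(λ) = H_λ/H_{λ^{(i)}}. -/

import Mathlib

/-!
Write `x k = λ_k - k`. Row by row, the hooks of row `a` together with the differences
`x a - x b` (`a < b ≤ l`) are exactly `1, …, x a + l`; this gives Frobenius' form
`H_λ · ∏_{a<b}(x a - x b) = ∏_a (x a + l)!` of the hook length formula, and comparing it for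
`λ` and `λ^{(i)}` yields `c_i(λ) = ∏_{j<l}(x i - x j + 1) / ∏_{j≠i}(x i - x j)`. These are the
Lagrange weights at the nodes `x 0, …, x l` of the degree-`l` polynomial `∏_{j<l}(z - x j + 1)`,
so the sum is the partial fraction expansion of `∏_{j<l}(z - x j + 1) / ∏_{k≤l}(z - x k)`.
Finally each row satisfies `C(-z) (z - x i) = (z + i) C(-z+1)` (a telescoping product over its
cells), and the factors `z + i` telescope over the rows.
-/

open Finset

/-- Conjugate part `λ'_j` (number of rows of length `≥ j`), rows indexed in `range L`. -/
def conjPart (L : ℕ) (lam : ℕ → ℕ) (j : ℕ) : ℕ :=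
  ((Finset.range L).filter (fun i => j ≤ lam i)).card

/-- Product of hook lengths `H_λ` (rows 0-indexed), as a rational number. -/
def hookProd (L : ℕ) (lam : ℕ → ℕ) : ℚ :=
  ∏ i ∈ Finset.range L, ∏ j ∈ Finset.Icc 1 (lam i),
    ((lam i : ℚ) + (conjPart L lam j : ℚ) - (i : ℚ) - (j : ℚ))

open scoped Classical in
/-- Transition probability `cᵢ(λ) = H_λ / H_{λ^{(i)}}`, equal to `0` when adding a
box to row `i` does not produce a partition. -/
noncomputable def transProb (L : ℕ) (lam : ℕ → ℕ) (i : ℕ) : ℚ :=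
  if Antitone (Function.update lam i (lam i + 1)) then
    hookProd L lam / hookProd L (Function.update lam i (lam i + 1))
  else 0

/-- Content polynomial `C_λ(w) = ∏_{(i,j)∈λ}(w + j - i)` (rows 0-indexed:
the content of the cell in row `i`, column `j` is `j - (i+1)`). -/
def contentPoly (l : ℕ) (lam : ℕ → ℕ) (w : ℚ) : ℚ :=
  ∏ i ∈ Finset.range l, ∏ j ∈ Finset.Icc 1 (lam i),
    (w + (j : ℚ) - ((i : ℚ) + 1))

open Polynomial Lagrange Function
open scoped Nat

section CommRing

variable {R : Type*} [CommRing R]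

theorem prod_Icc_one_add_one_sub_mul (c : R) (s : ℕ) :
    (∏ j ∈ Icc 1 s, (c + 1 - j)) * (c - s) = c * ∏ j ∈ Icc 1 s, (c - j) := by
  induction s with
  | zero => simp
  | succ s ih =>
    rw [prod_Icc_succ_top (by omega), prod_Icc_succ_top (by omega)]
    push_cast
    linear_combination (c - s - 1) * ih

theorem prod_Icc_one_add_one_sub_eq_factorial (s : ℕ) : ∏ j ∈ Icc 1 s, ((s : R) + 1 - j) = s ! := by
  induction s with
  | zero => simp
  | succ s ih =>
    have hshift := prod_Icc_one_add_one_sub_mul ((s : R) + 1) s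
    rw [prod_Icc_succ_top (by omega), Nat.factorial_succ, Nat.cast_mul, ← ih]
    push_cast at hshift ⊢
    linear_combination hshift

def vandermondeProd (x : ℕ → R) (n : ℕ) : R :=
  ∏ b ∈ range n, ∏ a ∈ range b, (x a - x b)

theorem vandermondeProd_succ (x : ℕ → R) (n : ℕ) :
    vandermondeProd x (n + 1) = vandermondeProd x n * ∏ a ∈ range n, (x a - x n) :=
  prod_range_succ _ _

theorem vandermondeProd_ne_zero [IsDomain R] {x : ℕ → R} {n : ℕ} (hx : Set.InjOn x (range n)) :
    vandermondeProd x n ≠ 0 :=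
  prod_ne_zero_iff.2 fun _ hb => prod_ne_zero_iff.2 fun _ ha => sub_ne_zero.2 fun h =>
    (mem_range.1 ha).ne (hx (mem_range.2 ((mem_range.1 ha).trans (mem_range.1 hb))) hb h)

theorem vandermondeProd_update_of_le (x : ℕ → R) (y : R) {i n : ℕ} (hn : n ≤ i) :
    vandermondeProd (update x i y) n = vandermondeProd x n :=
  prod_congr rfl fun _ hb => prod_congr rfl fun _ ha => by
    rw [mem_range] at ha hb
    rw [update_of_ne (by omega), update_of_ne (by omega)]

theorem vandermondeProd_update_mul (x : ℕ → R) {i n : ℕ} (hi : i < n) :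
    vandermondeProd (update x i (x i + 1)) n * ∏ b ∈ (range n).erase i, (x i - x b) =
      vandermondeProd x n * ∏ b ∈ (range n).erase i, (x i - x b + 1) := by
  induction n, hi using Nat.le_induction with
  | base =>
    rw [vandermondeProd_succ, vandermondeProd_succ, vandermondeProd_update_of_le _ _ le_rfl,
      range_add_one, erase_insert notMem_range_self, update_self,
      prod_congr rfl fun a ha => by rw [update_of_ne (mem_range.1 ha).ne]]
    rw [mul_assoc, mul_assoc, ← prod_mul_distrib, ← prod_mul_distrib]
    exact congrArg _ (prod_congr rfl fun _ _ => by ring)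
  | succ n hin ih =>
    have hrow : (∏ a ∈ range n, (update x i (x i + 1) a - update x i (x i + 1) n)) *
        (x i - x n) = (∏ a ∈ range n, (x a - x n)) * (x i - x n + 1) := by
      rw [update_of_ne (by omega), ← mul_prod_erase _ _ (mem_range.2 hin),
        ← mul_prod_erase (range n) (fun a => x a - x n) (mem_range.2 hin), update_self,
        prod_congr rfl fun a ha => by rw [update_of_ne (ne_of_mem_erase ha)]]
      ring
    have hn : n ∉ (range n).erase i := fun h => notMem_range_self (mem_of_mem_erase h)
    rw [vandermondeProd_succ, vandermondeProd_succ, range_add_one, erase_insert_of_ne (by omega),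
      prod_insert hn, prod_insert hn]
    linear_combination (∏ a ∈ range n, (x a - x n)) * (x i - x n + 1) * ih +
      vandermondeProd (update x i (x i + 1)) n * (∏ b ∈ (range n).erase i, (x i - x b)) * hrow

end CommRing

theorem prod_Icc_one_mul_prod_Ioc {M : Type*} [CommMonoid M] (f : ℕ → M) {s t : ℕ} (h : s ≤ t) :
    (∏ j ∈ Icc 1 s, f j) * ∏ j ∈ Ioc s t, f j = ∏ j ∈ Icc 1 t, f j := by
  have hsplit := prod_Ioc_consecutive f (Nat.zero_le s) h
  rwa [← Icc_add_one_left_eq_Ioc 0 s, ← Icc_add_one_left_eq_Ioc 0 t, zero_add] at hsplit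

theorem sum_nodalWeight_mul_eval_div {F ι : Type*} [Field F] [DecidableEq ι] {s : Finset ι}
    {v : ι → F} {f : F[X]} {x : F} (hvs : Set.InjOn v s) (hf : f.degree < #s)
    (hx : ∀ i ∈ s, x ≠ v i) :
    ∑ i ∈ s, nodalWeight s v i * f.eval (v i) / (x - v i) = f.eval x / ∏ i ∈ s, (x - v i) := by
  have hbary := eval_interpolate_not_at_node (fun i => f.eval (v i)) hx
  rw [← eq_interpolate hvs hf, eval_nodal] at hbary
  rw [hbary, mul_div_cancel_left₀ _ (prod_ne_zero_iff.2 fun i hi => sub_ne_zero.2 (hx i hi))]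
  exact sum_congr rfl fun i _ => by ring

section Hooks

variable {lam : ℕ → ℕ}

theorem conjPart_eq_of_le_lam (hanti : Antitone lam) {L k j : ℕ} (hL : L ≤ k + 1)
    (hj : j ≤ lam k) : conjPart L lam j = L := by
  rw [conjPart, filter_true_of_mem fun a ha => hj.trans (hanti (by rw [mem_range] at ha; omega)),
    card_range]

theorem conjPart_succ_of_lam_lt {L j : ℕ} (h : lam L < j) :
    conjPart (L + 1) lam j = conjPart L lam j := by
  rw [conjPart, conjPart, range_add_one, filter_insert, if_neg (by omega)]

def rowHookProd (L : ℕ) (lam : ℕ → ℕ) (i : ℕ) : ℚ :=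
  ∏ j ∈ Icc 1 (lam i), ((lam i : ℚ) + conjPart L lam j - i - j)

theorem hookProd_eq_prod_rowHookProd (L : ℕ) (lam : ℕ → ℕ) :
    hookProd L lam = ∏ i ∈ range L, rowHookProd L lam i := rfl

theorem rowHookProd_mul_prod_sub (hanti : Antitone lam) {i n : ℕ} (hin : i ≤ n) :
    rowHookProd (n + 1) lam i * ∏ b ∈ Ioc i n, (((lam i : ℚ) - i) - ((lam b : ℚ) - b)) =
      (lam i + n - i)! := by
  induction n, hin using Nat.le_induction with
  | base =>
    rw [Ioc_self, prod_empty, mul_one, rowHookProd, Nat.add_sub_cancel,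
      ← prod_Icc_one_add_one_sub_eq_factorial]
    refine prod_congr rfl fun j hj => ?_
    rw [conjPart_eq_of_le_lam hanti le_rfl (mem_Icc.1 hj).2]
    push_cast
    ring
  | succ n hin ih =>
    -- Row `n + 1` lengthens by one exactly the hooks of row `i` in the columns `j ≤ λ_{n+1}`.
    have hs : lam (n + 1) ≤ lam i := hanti (by omega)
    set N : ℚ := lam i + n + 1 - i
    have hlow : ∏ j ∈ Icc 1 (lam (n + 1)), ((lam i : ℚ) + conjPart (n + 1) lam j - i - j) =
        ∏ j ∈ Icc 1 (lam (n + 1)), (N - j) :=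
      prod_congr rfl fun j hj => by
        rw [conjPart_eq_of_le_lam hanti (by omega) (mem_Icc.1 hj).2]
        push_cast
        ring
    have hlow' : ∏ j ∈ Icc 1 (lam (n + 1)), ((lam i : ℚ) + conjPart (n + 1 + 1) lam j - i - j) =
        ∏ j ∈ Icc 1 (lam (n + 1)), (N + 1 - j) :=
      prod_congr rfl fun j hj => by
        rw [conjPart_eq_of_le_lam hanti le_rfl (mem_Icc.1 hj).2]
        push_cast
        ring
    have hhigh :
        ∏ j ∈ Ioc (lam (n + 1)) (lam i), ((lam i : ℚ) + conjPart (n + 1 + 1) lam j - i - j) =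
          ∏ j ∈ Ioc (lam (n + 1)) (lam i), ((lam i : ℚ) + conjPart (n + 1) lam j - i - j) :=
      prod_congr rfl fun j hj => by rw [conjPart_succ_of_lam_lt (mem_Ioc.1 hj).1]
    have hfac : ((lam i + (n + 1) - i)! : ℚ) = N * (lam i + n - i)! := by
      rw [show lam i + (n + 1) - i = lam i + n - i + 1 by omega, Nat.factorial_succ, Nat.cast_mul,
        Nat.cast_add_one, Nat.cast_sub (by omega)]
      push_cast
      ring
    rw [rowHookProd, ← prod_Icc_one_mul_prod_Ioc _ hs, hlow', hhigh, prod_Ioc_succ_top hin]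
    rw [rowHookProd, ← prod_Icc_one_mul_prod_Ioc _ hs, hlow] at ih
    have hshift := prod_Icc_one_add_one_sub_mul N (lam (n + 1))
    rw [hfac, ← ih]
    linear_combination (norm := (push_cast; ring1))
      (∏ j ∈ Ioc (lam (n + 1)) (lam i), ((lam i : ℚ) + conjPart (n + 1) lam j - i - j)) *
        (∏ b ∈ Ioc i n, (((lam i : ℚ) - i) - ((lam b : ℚ) - b))) * hshift

theorem Antitone.strictAnti_cast_sub (hanti : Antitone lam) : StrictAnti fun k => (lam k : ℚ) - k :=
  fun a b hab => by
    have h1 : (lam b : ℚ) ≤ lam a := by exact_mod_cast hanti hab.le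
    have h2 : (a : ℚ) < b := by exact_mod_cast hab
    simp only
    linarith

theorem hookProd_mul_vandermondeProd (hanti : Antitone lam) (n : ℕ) :
    hookProd (n + 1) lam * vandermondeProd (fun k => (lam k : ℚ) - k) (n + 1) =
      ∏ a ∈ range (n + 1), ((lam a + n - a)! : ℚ) := by
  have hswap : vandermondeProd (fun k => (lam k : ℚ) - k) (n + 1) =
      ∏ a ∈ range (n + 1), ∏ b ∈ Ioc a n, (((lam a : ℚ) - a) - ((lam b : ℚ) - b)) :=
    prod_comm' fun b a => by simp only [mem_range, mem_Ioc]; omega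
  rw [hswap, hookProd_eq_prod_rowHookProd, ← prod_mul_distrib]
  exact prod_congr rfl fun a ha => rowHookProd_mul_prod_sub hanti (by rw [mem_range] at ha; omega)

theorem antitone_update_succ (hanti : Antitone lam) {i : ℕ} (h : ∀ k < i, lam i < lam k) :
    Antitone (update lam i (lam i + 1)) := by
  intro a b hab
  have hba := hanti hab
  simp only [update_apply]
  split_ifs with hb ha ha <;> subst_vars
  · exact le_rfl
  · exact h a (lt_of_le_of_ne hab ha)
  · omega
  · exact hba

theorem hookProd_ne_zero (hanti : Antitone lam) (n : ℕ) : hookProd (n + 1) lam ≠ 0 :=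
  left_ne_zero_of_mul <| (hookProd_mul_vandermondeProd hanti n).symm ▸
    prod_ne_zero_iff.2 fun _ _ => Nat.cast_ne_zero.2 (Nat.factorial_ne_zero _)

theorem cast_update_succ_sub (lam : ℕ → ℕ) (i : ℕ) :
    (fun k => (update lam i (lam i + 1) k : ℚ) - k) =
      update (fun k => (lam k : ℚ) - k) i ((lam i : ℚ) - i + 1) := by
  funext k
  rcases eq_or_ne k i with rfl | hk
  · simp only [update_self]
    push_cast
    ring
  · simp only [update_of_ne hk]

theorem prod_factorial_update_succ {l i : ℕ} (hi : i ≤ l) :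
    ∏ a ∈ range (l + 1), ((update lam i (lam i + 1) a + l - a)! : ℚ) =
      ((lam i : ℚ) - i + l + 1) * ∏ a ∈ range (l + 1), ((lam a + l - a)! : ℚ) := by
  have hi' : i ∈ range (l + 1) := mem_range.2 (by omega)
  rw [← mul_prod_erase _ _ hi', ← mul_prod_erase _ _ hi', update_self,
    prod_congr rfl fun a ha => by rw [update_of_ne (ne_of_mem_erase ha)],
    show lam i + 1 + l - i = lam i + l - i + 1 by omega, Nat.factorial_succ, Nat.cast_mul,
    Nat.cast_add_one, Nat.cast_sub (by omega)]
  push_cast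
  ring

theorem hookProd_update_succ_mul_prod (hanti : Antitone lam)
    {l i : ℕ} (hA : Antitone (update lam i (lam i + 1))) (hl : lam l = 0) (hi : i ≤ l) :
    hookProd (l + 1) (update lam i (lam i + 1)) *
        ∏ j ∈ range l, (((lam i : ℚ) - i) - ((lam j : ℚ) - j) + 1) =
      hookProd (l + 1) lam *
        ∏ j ∈ (range (l + 1)).erase i, (((lam i : ℚ) - i) - ((lam j : ℚ) - j)) := by
  set x : ℕ → ℚ := fun k => (lam k : ℚ) - k with hx
  have hi' : i ∈ range (l + 1) := mem_range.2 (by omega)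
  have hF := hookProd_mul_vandermondeProd hanti l
  have hF' := hookProd_mul_vandermondeProd hA l
  rw [cast_update_succ_sub, prod_factorial_update_succ hi] at hF'
  have hV := vandermondeProd_update_mul x (mem_range.1 hi')
  have hG : (∏ j ∈ range l, (x i - x j + 1)) * (x i + l + 1) =
      ∏ j ∈ (range (l + 1)).erase i, (x i - x j + 1) := by
    have h := prod_range_succ (fun j => x i - x j + 1) l
    rw [← mul_prod_erase _ _ hi', sub_self, zero_add, one_mul] at h
    simp only [hx, hl, CharP.cast_eq_zero] at h ⊢
    linear_combination -h
  have hc : 0 < x i + l + 1 := by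
    have : (i : ℚ) ≤ l := by exact_mod_cast hi
    simp only [hx]
    linarith [Nat.cast_nonneg (α := ℚ) (lam i)]
  have hV0 := vandermondeProd_ne_zero (n := l + 1) hanti.strictAnti_cast_sub.injective.injOn
  apply mul_right_cancel₀ (mul_ne_zero hV0 hc.ne')
  linear_combination (norm := (simp only [hx]; ring1))
    hookProd (l + 1) (update lam i (lam i + 1)) * vandermondeProd x (l + 1) * hG
      - hookProd (l + 1) (update lam i (lam i + 1)) * hV
      + (∏ j ∈ (range (l + 1)).erase i, (x i - x j)) * hF'
      - (∏ j ∈ (range (l + 1)).erase i, (x i - x j)) * (x i + l + 1) * hF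

theorem transProb_eq (hanti : Antitone lam) {l i : ℕ} (hl : lam l = 0) (hi : i ≤ l) :
    transProb (l + 1) lam i =
      (∏ j ∈ range l, (((lam i : ℚ) - i) - ((lam j : ℚ) - j) + 1)) /
        ∏ j ∈ (range (l + 1)).erase i, (((lam i : ℚ) - i) - ((lam j : ℚ) - j)) := by
  rw [transProb]
  split_ifs with hA
  · have hE : ∏ j ∈ (range (l + 1)).erase i, (((lam i : ℚ) - i) - ((lam j : ℚ) - j)) ≠ 0 :=
      prod_ne_zero_iff.2 fun j hj => sub_ne_zero.2 fun h =>
        ne_of_mem_erase hj (hanti.strictAnti_cast_sub.injective h).symm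
    rw [div_eq_div_iff (hookProd_ne_zero hA l) hE]
    linear_combination (hookProd_update_succ_mul_prod hanti hA hl hi).symm
  · obtain ⟨k, hk, hki⟩ : ∃ k < i, lam k ≤ lam i := by
      by_contra! h
      exact hA (antitone_update_succ hanti h)
    have hprev : lam (i - 1) = lam i :=
      le_antisymm ((hanti (by omega : k ≤ i - 1)).trans hki) (hanti (by omega))
    rw [prod_eq_zero (i := i - 1) (mem_range.2 (by omega))
      (by rw [hprev, Nat.cast_sub (by omega : 1 ≤ i)]; ring), zero_div]

end Hooks

theorem contentPoly_neg_mul_prod (l : ℕ) (lam : ℕ → ℕ) (z : ℚ) :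
    contentPoly l lam (-z) * ∏ i ∈ range l, (z - ((lam i : ℚ) - i)) =
      (∏ i ∈ range l, (z + i)) * contentPoly l lam (-z + 1) := by
  rw [contentPoly, contentPoly, ← prod_mul_distrib, ← prod_mul_distrib]
  refine prod_congr rfl fun i _ => ?_
  have hshift := prod_Icc_one_add_one_sub_mul (z + i) (lam i)
  rw [prod_congr rfl fun (j : ℕ) _ => show -z + j - ((i : ℚ) + 1) = -(z + i + 1 - j) by ring,
    prod_congr rfl fun (j : ℕ) _ => show -z + 1 + j - ((i : ℚ) + 1) = -(z + i - j) by ring,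
    prod_neg, prod_neg]
  linear_combination (-1) ^ #(Icc 1 (lam i)) * hshift

theorem contentPoly_sq_mul_prod {l : ℕ} {lam : ℕ → ℕ} (hl : lam l = 0) (z : ℚ) :
    contentPoly l lam (-z) ^ 2 * ∏ k ∈ range (l + 1), (z - ((lam k : ℚ) - k)) =
      z * (contentPoly l lam (-z - 1) * contentPoly l lam (-z + 1)) *
        ∏ j ∈ range l, (z - ((lam j : ℚ) - j) + 1) := by
  have h0 := contentPoly_neg_mul_prod l lam z
  have h1 := contentPoly_neg_mul_prod l lam (z + 1)
  rw [show -(z + 1) = -z - 1 by ring, show -z - 1 + 1 = -z by ring,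
    prod_congr rfl fun _ _ => add_sub_right_comm z 1 _] at h1
  have htelescope : (∏ i ∈ range l, (z + i)) * (z + l) = z * ∏ i ∈ range l, (z + 1 + i) := by
    rw [← prod_range_succ (fun i : ℕ => z + i), prod_range_succ']
    push_cast
    rw [add_zero, mul_comm]
    exact congrArg _ (prod_congr rfl fun _ _ => by ring)
  rw [prod_range_succ, hl, CharP.cast_eq_zero, zero_sub, sub_neg_eq_add]
  linear_combination contentPoly l lam (-z) * (z + l) * h0
    - z * contentPoly l lam (-z + 1) * h1
    + contentPoly l lam (-z) * contentPoly l lam (-z + 1) * htelescope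

/-- The moment generating series of the transition measure:
`∑_i cᵢ(λ)/(z - λᵢ + i - 1) = z⁻¹ C_λ(-z)² / (C_λ(-z-1) C_λ(-z+1))`,
as an identity of rational functions of `z` (stated at every non-pole `z ∈ ℚ`). -/
theorem transition_measure_generating_series (l : ℕ) (lam : ℕ → ℕ)
    (hanti : Antitone lam) (hsupp : ∀ i, l ≤ i → lam i = 0)
    (z : ℚ) (hz0 : z ≠ 0)
    (hpole : ∀ i ∈ Finset.range (l + 1), z ≠ (lam i : ℚ) - (i : ℚ))
    (hden1 : contentPoly l lam (-z - 1) ≠ 0)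
    (hden2 : contentPoly l lam (-z + 1) ≠ 0) :
    ∑ i ∈ Finset.range (l + 1),
        transProb (l + 1) lam i / (z - ((lam i : ℚ) - (i : ℚ))) =
      z⁻¹ * contentPoly l lam (-z) ^ 2 /
        (contentPoly l lam (-z - 1) * contentPoly l lam (-z + 1)) := by
  have hl : lam l = 0 := hsupp l le_rfl
  set f : ℚ[X] := nodal (range l) fun j => (lam j : ℚ) - j - 1
  have hf : f.degree < #(range (l + 1)) := by
    rw [degree_nodal, card_range, card_range]
    exact_mod_cast l.lt_succ_self
  have hfrac := sum_nodalWeight_mul_eval_div (v := fun k => (lam k : ℚ) - k)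
    hanti.strictAnti_cast_sub.injective.injOn hf hpole
  have hQ : ∏ k ∈ range (l + 1), (z - ((lam k : ℚ) - k)) ≠ 0 :=
    prod_ne_zero_iff.2 fun k hk => sub_ne_zero.2 (hpole k hk)
  have hf_eval : ∀ w, f.eval w = ∏ j ∈ range l, (w - ((lam j : ℚ) - j) + 1) := fun w => by
    rw [eval_nodal]
    exact prod_congr rfl fun _ _ => by ring
  have hterm : ∀ i ∈ range (l + 1), transProb (l + 1) lam i / (z - ((lam i : ℚ) - i)) =
      nodalWeight (range (l + 1)) (fun k => (lam k : ℚ) - k) i * f.eval ((lam i : ℚ) - i) /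
        (z - ((lam i : ℚ) - i)) := fun i hi => by
    rw [transProb_eq hanti hl (mem_range_succ_iff.1 hi), hf_eval, nodalWeight, prod_inv_distrib]
    ring
  rw [sum_congr rfl hterm, hfrac, hf_eval, div_eq_div_iff hQ (mul_ne_zero hden1 hden2)]
  field_simp
  linear_combination -contentPoly_sq_mul_prod hl z
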